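/- arXiv:1212.2842 — 3 statements merged into one kernel-verified Lean document; each statement's English description precedes it below -/
import Mathlib

section
/- Let F be a field, A a finite-dimensional F-algebra, and ι an F-linear anti-automorphism of A such that ι ∘ ι is conjugation by a unit u of A. For a finite-dimensional A-module M, let δM denote the F-linear dual Hom_F(M, F) endowed with the A-module structure (a · f)(m) = f(ι(a) m). Then for every finite-dimensional A-module M there is an isomorphism of A-modules δ(δM) ≅ M. -/
/-!
Under the evaluation isomorphism `M ≃ δ(δM)` the action of `a` on `δ(δM)` becomes the action of
`ι (ι a) = u a u⁻¹` on `M`, so `δ(δM)` is `M` with its action twisted by an inner automorphism.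
Such a twist is undone by the `F`-linear automorphism `m ↦ u⁻¹ • m` of `M`.
-/

theorem Module.evalEquiv_symm_dualMap_dualMap {R M M' : Type*} [CommSemiring R]
    [AddCommMonoid M] [Module R M] [AddCommMonoid M'] [Module R M']
    [IsReflexive R M] [IsReflexive R M'] (f : M →ₗ[R] M') (Φ : Dual R (Dual R M)) :
    (evalEquiv R M').symm (f.dualMap.dualMap Φ) = f ((evalEquiv R M).symm Φ) := by
  rw [LinearEquiv.symm_apply_eq, ← Dual.eval_comp_comp_evalEquiv_eq]
  rfl

theorem Units.inv_smul_conj_smul {A M : Type*} [Monoid A] [MulAction A M] (u : Aˣ) (a : A)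
    (m : M) : u⁻¹ • ((u * a * ↑u⁻¹ : A) • m) = a • u⁻¹ • m := by
  rw [Units.smul_def, Units.smul_def, smul_smul, ← mul_assoc, ← mul_assoc, Units.inv_mul,
    one_mul, mul_smul]

theorem twisted_double_dual_iso_general
    (F : Type) [Field F] (A : Type) [Ring A] [Algebra F A]
    (M : Type) [AddCommGroup M] [Module F M] [Module A M] [IsScalarTower F A M]
    [FiniteDimensional F M]
    (ι : A ≃ₗ[F] A)
    (u : Aˣ)
    (hu : ∀ a : A, ι (ι a) = (u : A) * a * ((u⁻¹ : Aˣ) : A)) :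
    ∃ e : Module.Dual F (Module.Dual F M) ≃ₗ[F] M,
      ∀ (a : A) (Φ : Module.Dual F (Module.Dual F M)),
        e (((DistribMulAction.toLinearMap F M (ι (ι a))).dualMap).dualMap Φ) = a • e Φ := by
  refine ⟨(Module.evalEquiv F M).symm.trans (DistribMulAction.toLinearEquiv F M u⁻¹), ?_⟩
  intro a Φ
  rw [LinearEquiv.trans_apply, LinearEquiv.trans_apply, Module.evalEquiv_symm_dualMap_dualMap,
    hu]
  exact u.inv_smul_conj_smul a _

/-- Let `ι` be an `F`-linear anti-automorphism of a finite-dimensional `F`-algebra `A` such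
that `ι ∘ ι` is conjugation by a unit `u`.  For a finite-dimensional `A`-module `M`, the
twisted dual `δM` is `Hom_F(M, F)` with action `(a • f) m = f (ι a • m)`; thus the action of
`a` on `δM` is `(ι a • ·)ᵀ` and the action of `a` on `δ(δM)` is `((ι (ι a) • ·)ᵀ)ᵀ`, where
`(·)ᵀ` denotes `LinearMap.dualMap`.  Then `δ(δM) ≅ M` as `A`-modules, i.e. there is an
`F`-linear equivalence `e : δ(δM) ≃ M` intertwining the two `A`-actions. -/
theorem twisted_double_dual_iso
    (F : Type) [Field F] (A : Type) [Ring A] [Algebra F A] [FiniteDimensional F A]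
    (M : Type) [AddCommGroup M] [Module F M] [Module A M] [IsScalarTower F A M]
    [FiniteDimensional F M]
    (ι : A ≃ₗ[F] A)
    (hι_mul : ∀ a b : A, ι (a * b) = ι b * ι a)
    (hι_one : ι 1 = 1)
    (u : Aˣ)
    (hu : ∀ a : A, ι (ι a) = (u : A) * a * ((u⁻¹ : Aˣ) : A)) :
    ∃ e : Module.Dual F (Module.Dual F M) ≃ₗ[F] M,
      ∀ (a : A) (Φ : Module.Dual F (Module.Dual F M)),
        e (((DistribMulAction.toLinearMap F M (ι (ι a))).dualMap).dualMap Φ) = a • e Φ :=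
  twisted_double_dual_iso_general F A M ι u hu
end

section
/- Let F be a field, A a finite-dimensional F-algebra, w a positive natural number, and M, N finite-dimensional A-modules. Then the natural F-linear map (⨂_{i ∈ Fin w} Hom_A(M, N)) → Hom_{⨂_{i ∈ Fin w} A}(⨂_{i ∈ Fin w} M, ⨂_{i ∈ Fin w} N), sending f_1 ⊗ ⋯ ⊗ f_w to the map m_1 ⊗ ⋯ ⊗ m_w ↦ f_1(m_1) ⊗ ⋯ ⊗ f_w(m_w), is an isomorphism of F-vector spaces. -/
/-!
Since `piTensorHomMap` is an isomorphism for finite-dimensional spaces, the question is which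
tensors `T ∈ ⨂ Hom_F(M, N)` come from `⨂ Hom_A(M, N)`. Commuting with `1 ⊗ ⋯ ⊗ a ⊗ ⋯ ⊗ 1` says
that the commutator `[a, -]`, acting in the `i`-th factor, kills `T`. Every endomorphism of
`Hom_F(M, N)` vanishing on `Hom_A(M, N)` is a combination `∑ₖ uₖ ∘ [aₖ, -]` over a basis `(aₖ)`
of `A`, so it kills `T` in each factor as well. Applied to `1 - π` for a projection `π` onto
`Hom_A(M, N)`, this gives `T = (π ⊗ ⋯ ⊗ π) T`.
-/

open scoped TensorProduct

namespace PiTensorProduct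

open Module LinearMap

section Basis

variable {R ι : Type*} [CommRing R] [Fintype ι] [DecidableEq ι] {s t : ι → Type*}
  [∀ i, AddCommGroup (s i)] [∀ i, Module R (s i)] [∀ i, AddCommGroup (t i)] [∀ i, Module R (t i)]
  {κ μ : ι → Type*} [∀ i, Fintype (κ i)] [∀ i, Fintype (μ i)] [∀ i, DecidableEq (κ i)]

theorem piTensorHomMap_piTensorProduct_linearMap (bs : Π i, Basis (κ i) R (s i))
    (bt : Π i, Basis (μ i) R (t i)) (p : Π i, μ i × κ i) :
    piTensorHomMap (Basis.piTensorProduct (fun i => (bs i).linearMap (bt i)) p) =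
      (Basis.piTensorProduct bs).linearMap (Basis.piTensorProduct bt)
        (Equiv.arrowProdEquivProdArrow _ _ _ p) := by
  refine (Basis.piTensorProduct bs).ext fun q => ?_
  rw [Basis.linearMap_apply_apply]
  simp only [Basis.piTensorProduct_apply, piTensorHomMap_tprod_tprod, Basis.linearMap_apply_apply,
    Equiv.arrowProdEquivProdArrow_apply]
  by_cases hq : (fun i => (p i).2) = q
  · subst hq
    simp
  · obtain ⟨i, hi⟩ := Function.ne_iff.mp hq
    rw [if_neg hq]
    exact (tprod R).map_coord_zero i (by simp [hi])

theorem piTensorHomMap_bijective [∀ i, Free R (s i)] [∀ i, Module.Finite R (s i)]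
    [∀ i, Free R (t i)] [∀ i, Module.Finite R (t i)] :
    Function.Bijective (piTensorHomMap : (⨂[R] i, s i →ₗ[R] t i) →ₗ[R] _) := by
  classical
  let B := Basis.piTensorProduct fun i =>
    (Free.chooseBasis R (s i)).linearMap (Free.chooseBasis R (t i))
  let B' := (Basis.piTensorProduct fun i => Free.chooseBasis R (s i)).linearMap
    (Basis.piTensorProduct fun i => Free.chooseBasis R (t i))
  have h : piTensorHomMap = (B.equiv B' (Equiv.arrowProdEquivProdArrow _ _ _)).toLinearMap :=
    B.ext fun p => by
      rw [LinearEquiv.coe_coe, Basis.equiv_apply, piTensorHomMap_piTensorProduct_linearMap]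
  rw [h]
  exact LinearEquiv.bijective _

end Basis

section Slot

variable {R ι : Type*} [CommSemiring R] [DecidableEq ι] {s : ι → Type*}
  [∀ i, AddCommMonoid (s i)] [∀ i, Module R (s i)]

noncomputable def mapSlot (i : ι) : Module.End R (s i) →ₐ[R] Module.End R (⨂[R] j, s j) :=
  AlgHom.ofLinearMap ((mapMultilinear R s s).toLinearMap (fun _ => LinearMap.id) i)
    (by simp [Module.End.one_eq_id])
    (fun f g => by
      simp only [MultilinearMap.toLinearMap_apply, mapMultilinear_apply, Module.End.mul_eq_comp,
        ← map_comp]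
      congr 1
      funext j
      rcases eq_or_ne j i with rfl | hj <;> simp [*])

theorem mapSlot_apply (i : ι) (f : Module.End R (s i)) :
    mapSlot i f = map (Function.update (fun _ => LinearMap.id) i f) :=
  rfl

theorem mapSlot_comp_map {i : ι} (f : Module.End R (s i)) {g : Π j, Module.End R (s j)}
    (hg : g i = LinearMap.id) : mapSlot i f ∘ₗ map g = map (Function.update g i f) := by
  rw [mapSlot_apply, ← map_comp]
  congr 1
  funext j
  rcases eq_or_ne j i with rfl | hj <;> simp [*]

theorem map_apply_eq_self_of_mapSlot_apply_eq_self [Fintype ι] {f : Π i, Module.End R (s i)}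
    {T : ⨂[R] i, s i} (h : ∀ i, mapSlot i (f i) T = T) : map f T = T := by
  suffices ∀ u : Finset ι, map (u.piecewise f fun _ => LinearMap.id) T = T by
    simpa using this Finset.univ
  intro u
  induction u using Finset.induction_on with
  | empty => simp
  | insert i u hi ih =>
    rw [Finset.piecewise_insert, ← mapSlot_comp_map _ (Finset.piecewise_eq_of_notMem _ _ _ hi),
      LinearMap.comp_apply, ih, h]

end Slot

section Naturality

variable {R ι : Type*} [CommSemiring R] {s s' t t' : ι → Type*}
  [∀ i, AddCommMonoid (s i)] [∀ i, Module R (s i)] [∀ i, AddCommMonoid (s' i)]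
  [∀ i, Module R (s' i)] [∀ i, AddCommMonoid (t i)] [∀ i, Module R (t i)]
  [∀ i, AddCommMonoid (t' i)] [∀ i, Module R (t' i)]

attribute [local ext] PiTensorProduct.ext

theorem piTensorHomMap_map_llcomp (g : Π i, t i →ₗ[R] t' i) (T : ⨂[R] i, s i →ₗ[R] t i) :
    piTensorHomMap (map (fun i => llcomp R (s i) (t i) (t' i) (g i)) T) =
      map g ∘ₗ piTensorHomMap T := by
  suffices piTensorHomMap ∘ₗ map (fun i => llcomp R (s i) (t i) (t' i) (g i)) =
      llcomp R _ _ _ (map g) ∘ₗ piTensorHomMap from LinearMap.congr_fun this T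
  ext f x
  simp

theorem piTensorHomMap_map_lcomp (g : Π i, s' i →ₗ[R] s i) (T : ⨂[R] i, s i →ₗ[R] t i) :
    piTensorHomMap (map (fun i => lcomp R (t i) (g i)) T) = piTensorHomMap T ∘ₗ map g := by
  suffices piTensorHomMap ∘ₗ map (fun i => lcomp R (t i) (g i)) =
      lcomp R _ (map g) ∘ₗ piTensorHomMap from LinearMap.congr_fun this T
  ext f x
  simp

variable [DecidableEq ι]

theorem piTensorHomMap_mapSlot_llcomp (i : ι) (g : Module.End R (t i))
    (T : ⨂[R] i, s i →ₗ[R] t i) :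
    piTensorHomMap (mapSlot i (llcomp R (s i) (t i) (t i) g) T) =
      mapSlot i g ∘ₗ piTensorHomMap T := by
  rw [mapSlot_apply, mapSlot_apply, ← piTensorHomMap_map_llcomp]
  congr 3
  funext j
  rcases eq_or_ne j i with rfl | hj
  · simp
  · simp only [Function.update_of_ne hj]
    rfl

theorem piTensorHomMap_mapSlot_lcomp (i : ι) (g : Module.End R (s i))
    (T : ⨂[R] i, s i →ₗ[R] t i) :
    piTensorHomMap (mapSlot i (lcomp R (t i) g) T) = piTensorHomMap T ∘ₗ mapSlot i g := by
  rw [mapSlot_apply, mapSlot_apply, ← piTensorHomMap_map_lcomp]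
  congr 3
  funext j
  rcases eq_or_ne j i with rfl | hj
  · simp
  · simp only [Function.update_of_ne hj]
    rfl

end Naturality

section Field

variable {K ι : Type*} [Field K] {V W : ι → Type*} [∀ i, AddCommGroup (V i)] [∀ i, Module K (V i)]
  [∀ i, AddCommGroup (W i)] [∀ i, Module K (W i)]

theorem map_injective_of_injective {ρ : Π i, W i →ₗ[K] V i} (hρ : ∀ i, Function.Injective (ρ i)) :
    Function.Injective (map ρ) := by
  choose q hq using fun i => (ρ i).exists_leftInverse_of_injective (ker_eq_bot.2 (hρ i))
  refine Function.LeftInverse.injective (g := map q) fun T => ?_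
  rw [← LinearMap.comp_apply, ← map_comp]
  simp [hq]

theorem mem_range_map_of_mapSlot_apply_eq_zero [Fintype ι] [DecidableEq ι]
    {ρ : Π i, W i →ₗ[K] V i} (hρ : ∀ i, Function.Injective (ρ i)) {T : ⨂[K] i, V i}
    (hT : ∀ i (r : Module.End K (V i)), r ∘ₗ ρ i = 0 → mapSlot i r T = 0) :
    T ∈ range (map ρ) := by
  choose q hq using fun i => (ρ i).exists_leftInverse_of_injective (ker_eq_bot.2 (hρ i))
  have hfix (i : ι) : mapSlot i (ρ i ∘ₗ q i) T = T := by
    have h := hT i (LinearMap.id - ρ i ∘ₗ q i) (by rw [sub_comp, comp_assoc, hq]; simp)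
    rwa [map_sub, ← Module.End.one_eq_id, map_one, LinearMap.sub_apply, Module.End.one_apply,
      sub_eq_zero, eq_comm] at h
  refine ⟨map q T, ?_⟩
  rw [← LinearMap.comp_apply, ← map_comp]
  exact map_apply_eq_self_of_mapSlot_apply_eq_self hfix

end Field

end PiTensorProduct

namespace LinearMap

variable {K V V' V'' : Type*} [Field K] [AddCommGroup V] [Module K V] [AddCommGroup V']
  [Module K V'] [AddCommGroup V''] [Module K V'']

theorem exists_comp_eq_of_ker_le {f : V →ₗ[K] V'} {g : V →ₗ[K] V''} (h : ker f ≤ ker g) :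
    ∃ u : V' →ₗ[K] V'', u ∘ₗ f = g := by
  obtain ⟨u, hu⟩ := exists_extend ((ker f).liftQ g h ∘ₗ f.quotKerEquivRange.symm.toLinearMap)
  refine ⟨u, LinearMap.ext fun x => ?_⟩
  simpa [quotKerEquivRange_symm_apply_image] using LinearMap.congr_fun hu ⟨f x, mem_range_self f x⟩

theorem exists_sum_comp_eq_of_iInf_ker_le {κ : Type*} [Fintype κ] [DecidableEq κ]
    {D : κ → V →ₗ[K] V'} {g : V →ₗ[K] V''} (h : ⨅ k, ker (D k) ≤ ker g) :
    ∃ u : κ → V' →ₗ[K] V'', ∑ k, u k ∘ₗ D k = g := by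
  obtain ⟨u, rfl⟩ := exists_comp_eq_of_ker_le (f := pi D) (g := g) (by rwa [ker_pi])
  refine ⟨fun k => u ∘ₗ single K (fun _ => V') k, LinearMap.ext fun x => ?_⟩
  simp [← map_sum, Finset.univ_sum_single]
  rfl

end LinearMap

section SmulCommutator

open PiTensorProduct LinearMap

variable {F A M N : Type*} [Field F] [Ring A] [Algebra F A]
  [AddCommGroup M] [Module F M] [Module A M] [IsScalarTower F A M]
  [AddCommGroup N] [Module F N] [Module A N] [IsScalarTower F A N]

variable (M N) in
noncomputable def smulCommutator : A →ₗ[F] Module.End F (M →ₗ[F] N) :=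
  llcomp F M N N ∘ₗ (Algebra.lsmul F F N).toLinearMap -
    (llcomp F M M N).flip ∘ₗ (Algebra.lsmul F F M).toLinearMap

theorem smulCommutator_apply (a : A) :
    smulCommutator M N a = llcomp F M N N (DistribSMul.toLinearMap F N a) -
      lcomp F N (DistribSMul.toLinearMap F M a) :=
  rfl

theorem mem_range_restrictScalarsₗ_of_forall_smulCommutator_eq_zero {f : M →ₗ[F] N}
    (hf : ∀ a : A, smulCommutator M N a f = 0) : f ∈ range (restrictScalarsₗ F A M N F) := by
  refine ⟨{ f with map_smul' := fun a m => ?_ }, rfl⟩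
  have h : a • f m = f (a • m) := by
    simpa [smulCommutator_apply, sub_eq_zero] using LinearMap.congr_fun (hf a) m
  exact h.symm

variable {ι : Type*}

theorem piTensorHomMap_map_restrictScalarsₗ_comp_map (a : ι → A) (g : ⨂[F] _ : ι, M →ₗ[A] N) :
    piTensorHomMap (map (fun _ => restrictScalarsₗ F A M N F) g) ∘ₗ
        map (fun i => DistribSMul.toLinearMap F M (a i)) =
      map (fun i => DistribSMul.toLinearMap F N (a i)) ∘ₗ
        piTensorHomMap (map (fun _ => restrictScalarsₗ F A M N F) g) := by
  have hcomm (i : ι) :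
      lcomp F N (DistribSMul.toLinearMap F M (a i)) ∘ₗ restrictScalarsₗ F A M N F =
        llcomp F M N N (DistribSMul.toLinearMap F N (a i)) ∘ₗ restrictScalarsₗ F A M N F := by
    ext f m
    simp
  rw [← piTensorHomMap_map_lcomp, ← piTensorHomMap_map_llcomp]
  congr 1
  rw [← LinearMap.comp_apply, ← LinearMap.comp_apply, ← map_comp, ← map_comp]
  simp only [hcomm]

variable [DecidableEq ι]

theorem map_toLinearMap_update_one (i : ι) (a : A) :
    map (fun j => DistribSMul.toLinearMap F M (Function.update (1 : ι → A) i a j)) =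
      mapSlot i (DistribSMul.toLinearMap F M a) := by
  rw [mapSlot_apply]
  congr 1
  funext j
  rcases eq_or_ne j i with rfl | hj
  · simp
  · ext m
    simp [Function.update_of_ne hj]

theorem piTensorHomMap_mapSlot_smulCommutator (i : ι) (a : A) (T : ⨂[F] _ : ι, M →ₗ[F] N) :
    piTensorHomMap (mapSlot i (smulCommutator M N a) T) =
      mapSlot i (DistribSMul.toLinearMap F N a) ∘ₗ piTensorHomMap T -
        piTensorHomMap T ∘ₗ mapSlot i (DistribSMul.toLinearMap F M a) := by
  rw [smulCommutator_apply, map_sub, LinearMap.sub_apply, map_sub, piTensorHomMap_mapSlot_llcomp,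
    piTensorHomMap_mapSlot_lcomp]

theorem mapSlot_apply_eq_zero_of_comp_restrictScalarsₗ_eq_zero [Module.Finite F A]
    {T : ⨂[F] _ : ι, M →ₗ[F] N} (hT : ∀ i (a : A), mapSlot i (smulCommutator M N a) T = 0)
    {i : ι} {r : Module.End F (M →ₗ[F] N)} (hr : r ∘ₗ restrictScalarsₗ F A M N F = 0) :
    mapSlot i r T = 0 := by
  let b := Module.finBasis F A
  have hker : ⨅ k, ker (smulCommutator M N (b k)) ≤ ker r := by
    intro f hf
    have hb : (smulCommutator M N).flip f = 0 :=
      b.ext fun k => by simpa using (Submodule.mem_iInf _).1 hf k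
    obtain ⟨φ, rfl⟩ := mem_range_restrictScalarsₗ_of_forall_smulCommutator_eq_zero fun a =>
      LinearMap.congr_fun hb a
    exact LinearMap.congr_fun hr φ
  obtain ⟨u, rfl⟩ := exists_sum_comp_eq_of_iInf_ker_le hker
  simp [map_sum, ← Module.End.mul_eq_comp, hT]

end SmulCommutator

open PiTensorProduct LinearMap in
theorem piTensorHom_iso_general
    (F : Type) [Field F]
    (A : Type) [Ring A] [Algebra F A] [FiniteDimensional F A]
    (w : ℕ)
    (M N : Type) [AddCommGroup M] [Module F M] [Module A M] [IsScalarTower F A M]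
    [AddCommGroup N] [Module F N] [Module A N] [IsScalarTower F A N]
    [FiniteDimensional F M] [FiniteDimensional F N] :
    Function.Injective
      (LinearMap.comp PiTensorProduct.piTensorHomMap
        (PiTensorProduct.map
          (fun _i : Fin w => LinearMap.restrictScalarsₗ F A M N F))) ∧
    ∀ h : (⨂[F] _i : Fin w, M) →ₗ[F] (⨂[F] _i : Fin w, N),
      (h ∈ LinearMap.range
          (LinearMap.comp PiTensorProduct.piTensorHomMap
            (PiTensorProduct.map
              (fun _i : Fin w => LinearMap.restrictScalarsₗ F A M N F))) ↔
        ∀ a : Fin w → A,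
          h.comp (PiTensorProduct.map
              (fun i => DistribMulAction.toLinearMap F M (a i))) =
            (PiTensorProduct.map
              (fun i => DistribMulAction.toLinearMap F N (a i))).comp h) := by
  have hP := piTensorHomMap_bijective (R := F) (s := fun _ : Fin w => M) (t := fun _ => N)
  have hρ : Function.Injective (restrictScalarsₗ F A M N F) := restrictScalars_injective F
  refine ⟨hP.injective.comp (map_injective_of_injective fun _ => hρ),
    fun h => ⟨?_, fun hcomm => ?_⟩⟩
  · rintro ⟨g, rfl⟩ a
    exact piTensorHomMap_map_restrictScalarsₗ_comp_map a g
  · obtain ⟨T, rfl⟩ := hP.surjective h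
    have hslot (i : Fin w) (a : A) : mapSlot i (smulCommutator M N a) T = 0 :=
      hP.injective <| by
        rw [piTensorHomMap_mapSlot_smulCommutator, ← map_toLinearMap_update_one,
          ← map_toLinearMap_update_one, map_zero, sub_eq_zero]
        exact (hcomm _).symm
    obtain ⟨g, rfl⟩ := mem_range_map_of_mapSlot_apply_eq_zero (fun _ => hρ) fun i r hr =>
      mapSlot_apply_eq_zero_of_comp_restrictScalarsₗ_eq_zero hslot hr
    exact ⟨g, rfl⟩

/-- Let `A` be a finite-dimensional `F`-algebra, `w ≥ 1`, and `M`, `N` finite-dimensional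
`A`-modules.  The natural `F`-linear map
`⨂_{i ∈ Fin w} Hom_A(M, N) → Hom_{⨂ A}(⨂ M, ⨂ N)`, `f₁ ⊗ ⋯ ⊗ f_w ↦ f₁ ⊗ ⋯ ⊗ f_w`, is an
isomorphism of `F`-vector spaces: as a map into `Hom_F(⨂ M, ⨂ N)` it is injective, and its
range is exactly the set of maps commuting with the action of every pure tensor
`a₁ ⊗ ⋯ ⊗ a_w` of the tensor power algebra. -/
theorem piTensorHom_iso
    (F : Type) [Field F]
    (A : Type) [Ring A] [Algebra F A] [FiniteDimensional F A]
    (w : ℕ) (hw : 0 < w)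
    (M N : Type) [AddCommGroup M] [Module F M] [Module A M] [IsScalarTower F A M]
    [AddCommGroup N] [Module F N] [Module A N] [IsScalarTower F A N]
    [FiniteDimensional F M] [FiniteDimensional F N] :
    Function.Injective
      (LinearMap.comp PiTensorProduct.piTensorHomMap
        (PiTensorProduct.map
          (fun _i : Fin w => LinearMap.restrictScalarsₗ F A M N F))) ∧
    ∀ h : (⨂[F] _i : Fin w, M) →ₗ[F] (⨂[F] _i : Fin w, N),
      (h ∈ LinearMap.range
          (LinearMap.comp PiTensorProduct.piTensorHomMap
            (PiTensorProduct.map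
              (fun _i : Fin w => LinearMap.restrictScalarsₗ F A M N F))) ↔
        ∀ a : Fin w → A,
          h.comp (PiTensorProduct.map
              (fun i => DistribMulAction.toLinearMap F M (a i))) =
            (PiTensorProduct.map
              (fun i => DistribMulAction.toLinearMap F N (a i))).comp h) :=
  piTensorHom_iso_general F A w M N
end

section
/- Let F be a field, A an associative unital F-algebra, w a natural number, and ι an F-linear anti-automorphism of A such that ι ∘ ι is conjugation by a unit u of A. Let ι^{[w]} be the anti-automorphism of the wreath product A^{[w]} given on pure tensors by ι^{[w]}(a_1 ⊗ ⋯ ⊗ a_w ⊗ σ) = ι(a_{σ(1)}) ⊗ ⋯ ⊗ ι(a_{σ(w)}) ⊗ σ⁻¹. Then ι^{[w]} ∘ ι^{[w]} is conjugation by the unit (u ⊗ ⋯ ⊗ u) ⊗ 1 of A^{[w]}; in particular it is an inner automorphism of A^{[w]}. -/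
open scoped TensorProduct

/-! Both sides of `J (J x) = U * x * V` are linear in `x`, so it suffices to compare them on
pure tensors `a ⊗ σ`. Applying `J` twice permutes the entries by `σ` and back, giving
`ι (ι aᵢ) ⊗ σ = u aᵢ u⁻¹ ⊗ σ`; on the other side `U` carries the trivial permutation and `V`
has constant entries, so `U (a ⊗ σ) V = u aᵢ u⁻¹ ⊗ σ` as well. -/

theorem PiTensorProduct.linearMap_ext_tmul_single {R ι G N : Type*} [CommSemiring R]
    {M : ι → Type*} [∀ i, AddCommMonoid (M i)] [∀ i, Module R (M i)]
    [AddCommMonoid N] [Module R N]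
    {f g : (⨂[R] i, M i) ⊗[R] MonoidAlgebra R G →ₗ[R] N}
    (h : ∀ (m : ∀ i, M i) (x : G),
      f (tprod R m ⊗ₜ MonoidAlgebra.single x 1) = g (tprod R m ⊗ₜ MonoidAlgebra.single x 1)) :
    f = g :=
  TensorProduct.ext <| PiTensorProduct.ext <| MultilinearMap.ext fun m =>
    MonoidAlgebra.lhom_ext' fun x => LinearMap.ext_ring (h m x)

theorem wreath_antiAutomorphism_square_inner_general
    (F : Type) [Field F] (A : Type) [Ring A] [Algebra F A] (w : ℕ)
    (ι : A ≃ₗ[F] A)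
    (u : Aˣ)
    (hu : ∀ a : A, ι (ι a) = (u : A) * a * ((u⁻¹ : Aˣ) : A))
    (mul : ((⨂[F] _i : Fin w, A) ⊗[F] MonoidAlgebra F (Equiv.Perm (Fin w))) →ₗ[F]
        ((⨂[F] _i : Fin w, A) ⊗[F] MonoidAlgebra F (Equiv.Perm (Fin w))) →ₗ[F]
        ((⨂[F] _i : Fin w, A) ⊗[F] MonoidAlgebra F (Equiv.Perm (Fin w))))
    (hmul : ∀ (a b : Fin w → A) (σ τ : Equiv.Perm (Fin w)),
        mul ((PiTensorProduct.tprod F a) ⊗ₜ[F] MonoidAlgebra.single σ (1 : F))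
            ((PiTensorProduct.tprod F b) ⊗ₜ[F] MonoidAlgebra.single τ (1 : F)) =
          (PiTensorProduct.tprod F (fun i => a i * b (σ⁻¹ i))) ⊗ₜ[F]
            MonoidAlgebra.single (σ * τ) (1 : F))
    (J : ((⨂[F] _i : Fin w, A) ⊗[F] MonoidAlgebra F (Equiv.Perm (Fin w))) →ₗ[F]
        ((⨂[F] _i : Fin w, A) ⊗[F] MonoidAlgebra F (Equiv.Perm (Fin w))))
    (hJ : ∀ (a : Fin w → A) (σ : Equiv.Perm (Fin w)),
        J ((PiTensorProduct.tprod F a) ⊗ₜ[F] MonoidAlgebra.single σ (1 : F)) =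
          (PiTensorProduct.tprod F (fun i => ι (a (σ i)))) ⊗ₜ[F]
            MonoidAlgebra.single σ⁻¹ (1 : F)) :
    mul ((PiTensorProduct.tprod F (fun _ => ((u : A)))) ⊗ₜ[F]
          MonoidAlgebra.single (1 : Equiv.Perm (Fin w)) (1 : F))
        ((PiTensorProduct.tprod F (fun _ => (((u⁻¹ : Aˣ) : A)))) ⊗ₜ[F]
          MonoidAlgebra.single (1 : Equiv.Perm (Fin w)) (1 : F)) =
      (PiTensorProduct.tprod F (fun _ => (1 : A))) ⊗ₜ[F]
        MonoidAlgebra.single (1 : Equiv.Perm (Fin w)) (1 : F) ∧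
    mul ((PiTensorProduct.tprod F (fun _ => (((u⁻¹ : Aˣ) : A)))) ⊗ₜ[F]
          MonoidAlgebra.single (1 : Equiv.Perm (Fin w)) (1 : F))
        ((PiTensorProduct.tprod F (fun _ => ((u : A)))) ⊗ₜ[F]
          MonoidAlgebra.single (1 : Equiv.Perm (Fin w)) (1 : F)) =
      (PiTensorProduct.tprod F (fun _ => (1 : A))) ⊗ₜ[F]
        MonoidAlgebra.single (1 : Equiv.Perm (Fin w)) (1 : F) ∧
    ∀ x, J (J x) =
      mul (mul ((PiTensorProduct.tprod F (fun _ => ((u : A)))) ⊗ₜ[F]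
              MonoidAlgebra.single (1 : Equiv.Perm (Fin w)) (1 : F)) x)
        ((PiTensorProduct.tprod F (fun _ => (((u⁻¹ : Aˣ) : A)))) ⊗ₜ[F]
          MonoidAlgebra.single (1 : Equiv.Perm (Fin w)) (1 : F)) := by
  refine ⟨by simp [hmul], by simp [hmul], fun x => ?_⟩
  refine LinearMap.congr_fun (?_ : J ∘ₗ J = mul.flip _ ∘ₗ mul _) x
  exact PiTensorProduct.linearMap_ext_tmul_single fun a σ => by simp [hJ, hmul, hu]

/-- Let `ι` be an `F`-linear anti-automorphism of an `F`-algebra `A` such that `ι ∘ ι` is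
conjugation by a unit `u` of `A`, let `mul` be the multiplication of the wreath product
`A^{[w]}`, and let `J = ι^{[w]}` be the anti-automorphism of `A^{[w]}` given on pure tensors by
`J (a₁ ⊗ ⋯ ⊗ a_w ⊗ σ) = ι (a_{σ 1}) ⊗ ⋯ ⊗ ι (a_{σ w}) ⊗ σ⁻¹`.
Then `J ∘ J` is conjugation by the unit `U = (u ⊗ ⋯ ⊗ u) ⊗ 1` of `A^{[w]}`:
`U` is invertible, with inverse `V = (u⁻¹ ⊗ ⋯ ⊗ u⁻¹) ⊗ 1`, and `J (J x) = U * x * V` for all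
`x`.  In particular `J ∘ J` is an inner automorphism of `A^{[w]}`. -/
theorem wreath_antiAutomorphism_square_inner
    (F : Type) [Field F] (A : Type) [Ring A] [Algebra F A] (w : ℕ)
    (ι : A ≃ₗ[F] A)
    (hι_mul : ∀ a b : A, ι (a * b) = ι b * ι a)
    (hι_one : ι 1 = 1)
    (u : Aˣ)
    (hu : ∀ a : A, ι (ι a) = (u : A) * a * ((u⁻¹ : Aˣ) : A))
    (mul : ((⨂[F] _i : Fin w, A) ⊗[F] MonoidAlgebra F (Equiv.Perm (Fin w))) →ₗ[F]
        ((⨂[F] _i : Fin w, A) ⊗[F] MonoidAlgebra F (Equiv.Perm (Fin w))) →ₗ[F]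
        ((⨂[F] _i : Fin w, A) ⊗[F] MonoidAlgebra F (Equiv.Perm (Fin w))))
    (hmul : ∀ (a b : Fin w → A) (σ τ : Equiv.Perm (Fin w)),
        mul ((PiTensorProduct.tprod F a) ⊗ₜ[F] MonoidAlgebra.single σ (1 : F))
            ((PiTensorProduct.tprod F b) ⊗ₜ[F] MonoidAlgebra.single τ (1 : F)) =
          (PiTensorProduct.tprod F (fun i => a i * b (σ⁻¹ i))) ⊗ₜ[F]
            MonoidAlgebra.single (σ * τ) (1 : F))
    (J : ((⨂[F] _i : Fin w, A) ⊗[F] MonoidAlgebra F (Equiv.Perm (Fin w))) →ₗ[F]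
        ((⨂[F] _i : Fin w, A) ⊗[F] MonoidAlgebra F (Equiv.Perm (Fin w))))
    (hJ : ∀ (a : Fin w → A) (σ : Equiv.Perm (Fin w)),
        J ((PiTensorProduct.tprod F a) ⊗ₜ[F] MonoidAlgebra.single σ (1 : F)) =
          (PiTensorProduct.tprod F (fun i => ι (a (σ i)))) ⊗ₜ[F]
            MonoidAlgebra.single σ⁻¹ (1 : F)) :
    mul ((PiTensorProduct.tprod F (fun _ => ((u : A)))) ⊗ₜ[F]
          MonoidAlgebra.single (1 : Equiv.Perm (Fin w)) (1 : F))
        ((PiTensorProduct.tprod F (fun _ => (((u⁻¹ : Aˣ) : A)))) ⊗ₜ[F]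
          MonoidAlgebra.single (1 : Equiv.Perm (Fin w)) (1 : F)) =
      (PiTensorProduct.tprod F (fun _ => (1 : A))) ⊗ₜ[F]
        MonoidAlgebra.single (1 : Equiv.Perm (Fin w)) (1 : F) ∧
    mul ((PiTensorProduct.tprod F (fun _ => (((u⁻¹ : Aˣ) : A)))) ⊗ₜ[F]
          MonoidAlgebra.single (1 : Equiv.Perm (Fin w)) (1 : F))
        ((PiTensorProduct.tprod F (fun _ => ((u : A)))) ⊗ₜ[F]
          MonoidAlgebra.single (1 : Equiv.Perm (Fin w)) (1 : F)) =
      (PiTensorProduct.tprod F (fun _ => (1 : A))) ⊗ₜ[F]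
        MonoidAlgebra.single (1 : Equiv.Perm (Fin w)) (1 : F) ∧
    ∀ x, J (J x) =
      mul (mul ((PiTensorProduct.tprod F (fun _ => ((u : A)))) ⊗ₜ[F]
              MonoidAlgebra.single (1 : Equiv.Perm (Fin w)) (1 : F)) x)
        ((PiTensorProduct.tprod F (fun _ => (((u⁻¹ : Aˣ) : A)))) ⊗ₜ[F]
          MonoidAlgebra.single (1 : Equiv.Perm (Fin w)) (1 : F)) :=
  wreath_antiAutomorphism_square_inner_general F A w ι u hu mul hmul J hJ
end
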